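/- If every APS layer input length is divisible by the stride s and all polyphase norm maxima are attained uniquely, then the full pipeline — FFT, followed by alternating shift-equivariant layers (complex convolution, elementwise ComplexReLU) and APS layers, followed by global average pooling — produces the same final output for x and for its modulation x_d[n] = x[n] e^{2πi m n/N} for any integer m. -/

import Mathlib

open Complex Finset

noncomputable section

/-- Circular shift by `m` bins: `(shift N m x) k = x ((k - m) mod N)`. -/
def shift (N : ℕ) (m : ℤ) (x : Fin N → ℂ) : Fin N → ℂ :=
  fun k => x ⟨(((k : ℤ) - m) % N).toNat, by
    have hN : 0 < N := k.pos
    have h1 := Int.emod_nonneg ((k : ℤ) - m) (by exact_mod_cast hN.ne' : (N:ℤ) ≠ 0)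
    have h2 := Int.emod_lt_of_pos ((k : ℤ) - m) (by exact_mod_cast hN : (0:ℤ) < N)
    omega⟩

/-- Polyphase component at offset `j`: the vector `k ↦ x (j + k·s)`. -/
def poly (N s : ℕ) (j : Fin s) (x : Fin N → ℂ) : Fin (N / s) → ℂ :=
  fun k => x ⟨((j : ℕ) + (k : ℕ) * s) % N,
    Nat.mod_lt _ (lt_of_lt_of_le k.pos (Nat.div_le_self N s))⟩

/-- Squared ℓ2 norm of a finite complex vector. -/
def nrm2 {L : ℕ} (v : Fin L → ℂ) : ℝ := ∑ k, ‖v k‖ ^ 2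

/-- ℓ2 norm of a finite complex vector. -/
def l2 {L : ℕ} (v : Fin L → ℂ) : ℝ := Real.sqrt (nrm2 v)

/-- Multiset of entries of a vector. -/
def entries {L : ℕ} (v : Fin L → ℂ) : Multiset ℂ := Finset.univ.val.map v

/-- The element of `Fin s` given by `a mod s`. -/
def modFin (s : ℕ) (hs : 0 < s) (a : ℤ) : Fin s :=
  ⟨(a % s).toNat, by
    have h1 := Int.emod_nonneg a (by exact_mod_cast hs.ne' : (s:ℤ) ≠ 0)
    have h2 := Int.emod_lt_of_pos a (by exact_mod_cast hs : (0:ℤ) < s)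
    omega⟩

/-- Circular convolution `(x ⋆ w)[k] = Σ_j x[(k-j) mod N] w[j]`. -/
def cconv (N : ℕ) (x w : Fin N → ℂ) : Fin N → ℂ :=
  fun k => ∑ j : Fin N, shift N (j : ℤ) x k * w j

/-- Elementwise complex ReLU. -/
def crelu {L : ℕ} (x : Fin L → ℂ) : Fin L → ℂ :=
  fun k => ⟨max (x k).re 0, max (x k).im 0⟩

/-- Global average pooling. -/
def gap {L : ℕ} (x : Fin L → ℂ) : ℂ := (∑ k, x k) / L

/-- Discrete Fourier transform. -/
def dft (N : ℕ) (x : Fin N → ℂ) : Fin N → ℂ :=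
  fun k => ∑ n : Fin N, x n * Complex.exp (-2 * Real.pi * Complex.I * k * n / N)

/-- There is a unique polyphase offset of maximal ℓ2 norm. -/
def uniqueMax (L s : ℕ) (v : Fin L → ℂ) : Prop :=
  ∃! j : Fin s, ∀ j' : Fin s, l2 (poly L s j' v) ≤ l2 (poly L s j v)

/-- The offset selected by APS: a polyphase component of maximal ℓ2 norm. -/
noncomputable def apsIdx (L s : ℕ) (hs : 0 < s) (v : Fin L → ℂ) : Fin s :=
  (Finset.exists_max_image (Finset.univ : Finset (Fin s)) (fun j => l2 (poly L s j v))
    (Finset.univ_nonempty_iff.mpr ⟨⟨0, hs⟩⟩)).choose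

/-- APS pooling layer: outputs the polyphase component of maximal ℓ2 norm. -/
noncomputable def aps (L s : ℕ) (hs : 0 < s) (v : Fin L → ℂ) : Fin (L / s) → ℂ :=
  poly L s (apsIdx L s hs v) v

/-- One convolution + ComplexReLU layer. -/
noncomputable def layer (L : ℕ) (w u : Fin L → ℂ) : Fin L → ℂ :=
  crelu (cconv L u w)

/-- The full network: FFT, then three (conv, ReLU, APS) blocks, then global average pool. -/
noncomputable def net (N s : ℕ) (hs : 0 < s)
    (w1 : Fin N → ℂ) (w2 : Fin (N / s) → ℂ) (w3 : Fin (N / s / s) → ℂ)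
    (x : Fin N → ℂ) : ℂ :=
  gap (aps (N / s / s) s hs (layer (N / s / s) w3
        (aps (N / s) s hs (layer (N / s) w2
          (aps N s hs (layer N w1 (dft N x)))))))
/-! The FFT turns modulation by `e^{2πimn/N}` into a circular shift of the spectrum by `m`, and
convolution and ComplexReLU commute with circular shifts. Shifting the input of an APS layer by
`m` sends the polyphase component at offset `j` to a circular shift of the component at offset
`(j - m) mod s`; the ℓ2 norms are only permuted, so when the maximum is unique APS selects the
same component up to a circular shift. Global average pooling forgets the accumulated shift. -/

lemma Fin.eq_of_intModEq {n : ℕ} {a b : Fin n} (h : (a : ℤ) ≡ b [ZMOD n]) : a = b :=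
  Fin.ext (Nat.ModEq.eq_of_lt_of_lt (Int.natCast_modEq_iff.1 h) a.2 b.2)

section modFin

variable {s : ℕ} (hs : 0 < s)

lemma coe_modFin (a : ℤ) : ((modFin s hs a : ℕ) : ℤ) = a % s :=
  Int.toNat_of_nonneg (Int.emod_nonneg a (by exact_mod_cast hs.ne'))

lemma modFin_modEq (a : ℤ) : ((modFin s hs a : ℕ) : ℤ) ≡ a [ZMOD s] := by
  rw [coe_modFin]
  exact Int.mod_modEq a s

lemma modFin_eq_modFin_iff {a b : ℤ} : modFin s hs a = modFin s hs b ↔ a ≡ b [ZMOD s] := by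
  rw [Fin.ext_iff, ← Nat.cast_inj (R := ℤ), coe_modFin, coe_modFin]
  rfl

lemma bijective_modFin_sub (m : ℤ) : Function.Bijective fun j : Fin s => modFin s hs (j - m) :=
  Finite.injective_iff_bijective.1 fun a b h =>
    Fin.eq_of_intModEq (by simpa using ((modFin_eq_modFin_iff hs).1 h).add_right m)

end modFin

section shift

variable {N : ℕ}

lemma shift_apply (m : ℤ) (x : Fin N → ℂ) (k : Fin N) :
    shift N m x k = x (modFin N k.pos (k - m)) :=
  rfl

lemma sum_comp_modFin_sub {M : Type*} [AddCommMonoid M] (m : ℤ) (f : Fin N → M) :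
    ∑ k : Fin N, f (modFin N k.pos (k - m)) = ∑ k, f k := by
  rcases N.eq_zero_or_pos with rfl | hN
  · simp
  · exact Fintype.sum_bijective _ (bijective_modFin_sub hN m) _ _ fun _ => rfl

lemma shift_comm (a b : ℤ) (x : Fin N → ℂ) :
    shift N a (shift N b x) = shift N b (shift N a x) := by
  funext k
  simp only [shift_apply]
  refine congrArg x (Fin.eq_of_intModEq ?_)
  calc _ ≡ (k - a : ℤ) - b [ZMOD N] :=
        (modFin_modEq k.pos _).trans ((modFin_modEq k.pos _).sub_right b)
    _ = k - b - a := sub_right_comm _ _ _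
    _ ≡ _ [ZMOD N] := ((modFin_modEq k.pos _).trans ((modFin_modEq k.pos _).sub_right a)).symm

lemma nrm2_shift (m : ℤ) (x : Fin N → ℂ) : nrm2 (shift N m x) = nrm2 x :=
  sum_comp_modFin_sub m fun k => ‖x k‖ ^ 2

lemma l2_shift (m : ℤ) (x : Fin N → ℂ) : l2 (shift N m x) = l2 x := by
  rw [l2, nrm2_shift, l2]

lemma gap_shift (m : ℤ) (x : Fin N → ℂ) : gap (shift N m x) = gap x := by
  rw [gap, gap, ← sum_comp_modFin_sub m x]
  rfl

lemma cconv_shift (m : ℤ) (x w : Fin N → ℂ) :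
    cconv N (shift N m x) w = shift N m (cconv N x w) := by
  funext k
  simp only [cconv, shift_comm _ m x]
  rfl

lemma layer_shift (m : ℤ) (w u : Fin N → ℂ) :
    layer N w (shift N m u) = shift N m (layer N w u) := by
  rw [layer, layer, cconv_shift]
  rfl

end shift

lemma cexp_two_pi_I_div_congr {N : ℕ} {a b : ℤ} (h : a ≡ b [ZMOD N]) :
    exp (2 * Real.pi * I * a / N) = exp (2 * Real.pi * I * b / N) := by
  obtain ⟨t, ht⟩ := h.dvd
  rw [show b = a + N * t by linarith]
  rcases eq_or_ne (N : ℂ) 0 with hN | hN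
  · simp [hN]
  · rw [exp_eq_exp_iff_exists_int]
    refine ⟨-t, ?_⟩
    push_cast
    field_simp
    ring

lemma dft_modulate (N : ℕ) (m : ℤ) (x : Fin N → ℂ) :
    dft N (fun n => x n * exp (2 * Real.pi * I * m * n / N)) = shift N m (dft N x) := by
  funext k
  rw [shift_apply]
  refine sum_congr rfl fun n _ => ?_
  set K := modFin N k.pos (k - m)
  have hK : (m - k) * n ≡ -K * n [ZMOD N] := by
    simpa only [neg_sub] using ((modFin_modEq k.pos (k - m)).neg.mul_right n).symm
  rw [mul_assoc, ← exp_add]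
  convert congrArg (x n * ·) (cexp_two_pi_I_div_congr hK) using 3 <;> push_cast <;> ring

section polyphase

variable {L s : ℕ}

lemma poly_apply_of_modEq (j : Fin s) (x : Fin L → ℂ) {k : Fin (L / s)} {i : Fin L}
    (h : (i : ℤ) ≡ j + k * s [ZMOD L]) : poly L s j x k = x i := by
  refine congrArg x (Fin.eq_of_intModEq ?_)
  push_cast
  exact (Int.mod_modEq _ _).trans h.symm

lemma poly_shift (hd : s ∣ L) {j j' : Fin s} {m q : ℤ} (hq : (j' : ℤ) + s * q = j - m)
    (v : Fin L → ℂ) : poly L s j (shift L m v) = shift (L / s) (-q) (poly L s j' v) := by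
  funext k
  have hL : 0 < L := Nat.pos_of_ne_zero fun h => by simpa [h] using k.pos
  have hLs : ((L / s : ℕ) : ℤ) * s = L := by exact_mod_cast Nat.div_mul_cancel hd
  rw [poly_apply_of_modEq j _ (modFin_modEq hL _), shift_apply, shift_apply,
    poly_apply_of_modEq j' v (modFin_modEq hL _)]
  refine congrArg v (Fin.eq_of_intModEq ?_)
  have hk : (k + q : ℤ) * s ≡ ((modFin (L / s) k.pos (k - -q) : ℕ) : ℤ) * s [ZMOD L] := by
    rw [← hLs, sub_neg_eq_add]
    exact (modFin_modEq k.pos _).symm.mul_right'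
  calc _ ≡ (j + k * s : ℤ) - m [ZMOD L] :=
        (modFin_modEq hL _).trans ((modFin_modEq hL _).sub_right m)
    _ = j' + (k + q) * s := by linear_combination -hq
    _ ≡ j' + ((modFin (L / s) k.pos (k - -q) : ℕ) : ℤ) * s [ZMOD L] := hk.add_left _
    _ ≡ _ [ZMOD L] := (modFin_modEq hL _).symm

lemma le_l2_poly_apsIdx (hs : 0 < s) (v : Fin L → ℂ) (j : Fin s) :
    l2 (poly L s j v) ≤ l2 (poly L s (apsIdx L s hs v) v) :=
  (Finset.exists_max_image univ (fun j => l2 (poly L s j v))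
    (univ_nonempty_iff.mpr ⟨⟨0, hs⟩⟩)).choose_spec.2 j (mem_univ j)

lemma aps_shift (hs : 0 < s) (hd : s ∣ L) {v : Fin L → ℂ} (hu : uniqueMax L s v) (m : ℤ) :
    ∃ m' : ℤ, aps L s hs (shift L m v) = shift (L / s) m' (aps L s hs v) := by
  obtain ⟨j₀, -, hj₀⟩ := hu
  set σ : Fin s → Fin s := fun j => modFin s hs (j - m)
  have hdecomp (j : Fin s) : ((σ j : ℕ) : ℤ) + s * ((j - m) / s) = j - m := by
    rw [coe_modFin]
    exact Int.emod_add_mul_ediv _ _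
  have hnorm (j : Fin s) : l2 (poly L s j (shift L m v)) = l2 (poly L s (σ j) v) := by
    rw [poly_shift hd (hdecomp j), l2_shift]
  set j₁ := apsIdx L s hs (shift L m v)
  have hj₁ : σ j₁ = j₀ := hj₀ _ fun j => by
    obtain ⟨i, rfl⟩ := (bijective_modFin_sub hs m).2 j
    simpa only [hnorm] using le_l2_poly_apsIdx hs (shift L m v) i
  have hv : apsIdx L s hs v = j₀ := hj₀ _ (le_l2_poly_apsIdx hs v)
  refine ⟨-((j₁ - m) / s), ?_⟩
  rw [aps, aps, hv, ← hj₁]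
  exact poly_shift hd (hdecomp j₁) v

end polyphase

theorem stmt18_general (N s : ℕ) (hs : 0 < s)
    (hd1 : s ∣ N) (hd2 : s ∣ N / s) (hd3 : s ∣ N / s / s)
    (w1 : Fin N → ℂ) (w2 : Fin (N / s) → ℂ) (w3 : Fin (N / s / s) → ℂ)
    (x xd : Fin N → ℂ) (m : ℤ)
    (hxd : ∀ n : Fin N, xd n = x n * Complex.exp (2 * Real.pi * Complex.I * m * n / N))
    (hu1 : uniqueMax N s (layer N w1 (dft N x)))
    (hu2 : uniqueMax (N / s) s (layer (N / s) w2 (aps N s hs (layer N w1 (dft N x)))))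
    (hu3 : uniqueMax (N / s / s) s (layer (N / s / s) w3
        (aps (N / s) s hs (layer (N / s) w2 (aps N s hs (layer N w1 (dft N x))))))) :
    net N s hs w1 w2 w3 xd = net N s hs w1 w2 w3 x := by
  obtain ⟨m₁, h₁⟩ := aps_shift hs hd1 hu1 m
  obtain ⟨m₂, h₂⟩ := aps_shift hs hd2 hu2 m₁
  obtain ⟨m₃, h₃⟩ := aps_shift hs hd3 hu3 m₂
  rw [net, net, funext hxd, dft_modulate, layer_shift, h₁, layer_shift, h₂, layer_shift, h₃,
    gap_shift]

theorem stmt18 (N s : ℕ) (hs : 0 < s) (hN : 0 < N)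
    (hd1 : s ∣ N) (hd2 : s ∣ N / s) (hd3 : s ∣ N / s / s)
    (w1 : Fin N → ℂ) (w2 : Fin (N / s) → ℂ) (w3 : Fin (N / s / s) → ℂ)
    (x xd : Fin N → ℂ) (m : ℤ)
    (hxd : ∀ n : Fin N, xd n = x n * Complex.exp (2 * Real.pi * Complex.I * m * n / N))
    (hu1 : uniqueMax N s (layer N w1 (dft N x)))
    (hu2 : uniqueMax (N / s) s (layer (N / s) w2 (aps N s hs (layer N w1 (dft N x)))))
    (hu3 : uniqueMax (N / s / s) s (layer (N / s / s) w3
        (aps (N / s) s hs (layer (N / s) w2 (aps N s hs (layer N w1 (dft N x))))))) :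
    net N s hs w1 w2 w3 xd = net N s hs w1 w2 w3 x :=
  stmt18_general N s hs hd1 hd2 hd3 w1 w2 w3 x xd m hxd hu1 hu2 hu3
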